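/- arXiv:2504.05194 — 3 statements merged into one kernel-verified Lean document; each statement's English description precedes it below -/
import Mathlib

section
/- Let Γ be a finitely generated blueprint, A a finite alphabet, and ℱ a set of forbidden patterns. Suppose φ ∈ ℳ(Γ) is a model with X[Γ, φ, ℱ] ≠ ∅. Then for every model φ' in the closure of the orbit of φ (with respect to the prodiscrete topology and the partial action (φ·w)(u) = φ(wu) for w ∈ supp(φ)), the φ'-subshift X[Γ, φ', ℱ] is also nonempty. -/
/-- A blueprint: states `M`, generators `S`, initial and terminal maps, and relations. -/
structure Blueprint (M S : Type*) where
  init : S → M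
  term : S → Set M
  term_nonempty : ∀ s : S, (term s).Nonempty
  rel : Set (List S × List S)

namespace Blueprint

variable {M S : Type*}

/-- A map `φ : S* → M ∪ {∅}` is `Γ`-consistent. -/
def Consistent (Γ : Blueprint M S) (φ : List S → Option M) : Prop :=
  φ [] ≠ none ∧ ∀ (w : List S) (s : S),
    (φ w = some (Γ.init s) → ∃ m ∈ Γ.term s, φ (w ++ [s]) = some m) ∧
    (φ w ≠ some (Γ.init s) → φ (w ++ [s]) = none)

/-- Two words are `Γ`-similar if they differ by replacing a relator. -/
def Similar (Γ : Blueprint M S) (u v : List S) : Prop :=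
  ∃ x y w w', (w, w') ∈ Γ.rel ∧ u = x ++ w ++ y ∧ v = x ++ w' ++ y

/-- `Γ`-equivalence: the equivalence relation generated by `Γ`-similarity. -/
def Equiv (Γ : Blueprint M S) : List S → List S → Prop :=
  Relation.EqvGen Γ.Similar

/-- A `Γ`-model: a `Γ`-consistent map constant on `Γ`-equivalence classes within its support. -/
def IsModel (Γ : Blueprint M S) (φ : List S → Option M) : Prop :=
  Γ.Consistent φ ∧
    ∀ u v : List S, Γ.Equiv u v → φ u ≠ none → φ v ≠ none → φ u = φ v

end Blueprint

instance (priority := low) optionDiscrete {α : Type*} : TopologicalSpace (Option α) := ⊥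

/-- The joint configuration `(φ(w), x(w))` as an element of `(M × A) ∪ {∅}`. -/
def confPair {M S A : Type*} (φ : List S → Option M) (x : List S → Option A)
    (w : List S) : Option (M × A) :=
  (φ w).bind fun m => (x w).map fun a => (m, a)

/-- `x` belongs to the `φ`-subshift `X[Γ, φ, F]`: conditions (s1), (s2), (s3). -/
def Blueprint.InPhiSubshift {M S A : Type*} (Γ : Blueprint M S)
    (φ : List S → Option M) (F : Set (List S → Option (M × A)))
    (x : List S → Option A) : Prop :=
  (∀ w : List S, x w ≠ none ↔ φ w ≠ none) ∧
  (∀ u v : List S, Γ.Equiv u v → φ u ≠ none → φ v ≠ none → x u = x v) ∧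
  (∀ p ∈ F, ∀ w : List S, φ w ≠ none →
    ∃ u : List S, p u ≠ none ∧ confPair φ x (w ++ u) ≠ p u)

instance optionDiscreteTop {α : Type*} : DiscreteTopology (Option α) := ⟨rfl⟩

/-- `Γ`-equivalence is preserved by prepending a word. -/
lemma Blueprint.Equiv.prepend {M S : Type*} {Γ : Blueprint M S} {u v : List S}
    (w : List S) (h : Γ.Equiv u v) : Γ.Equiv (w ++ u) (w ++ v) := by
  induction h with
  | rel a b hab =>
      obtain ⟨p, q, r, r', hr, ha, hb⟩ := hab
      exact Relation.EqvGen.rel _ _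
        ⟨w ++ p, q, r, r', hr, by simp [ha, List.append_assoc],
          by simp [hb, List.append_assoc]⟩
  | refl a => exact Relation.EqvGen.refl _
  | symm a b _ ih => exact Relation.EqvGen.symm _ _ ih
  | trans a b c _ _ ih1 ih2 => exact Relation.EqvGen.trans _ _ _ ih1 ih2

open Filter in
/-- If the `φ`-subshift is nonempty, then it is nonempty for every model `φ'` in the closure
of the orbit of `φ` under the partial shift action. -/
theorem stmt14 {M S A : Type*} [Finite M] [Finite S] [Finite A]
    (Γ : Blueprint M S) (F : Set (List S → Option (M × A)))
    (hF : ∀ p ∈ F, {u : List S | p u ≠ none}.Finite)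
    (φ : List S → Option M) (hφ : Γ.IsModel φ)
    (hne : ∃ x : List S → Option A, Γ.InPhiSubshift φ F x)
    (φ' : List S → Option M) (hφ' : Γ.IsModel φ')
    (hcl : φ' ∈ closure {ψ : List S → Option M |
      ∃ w : List S, φ w ≠ none ∧ ψ = fun u => φ (w ++ u)}) :
    ∃ x' : List S → Option A, Γ.InPhiSubshift φ' F x' := by
  classical
  haveI : Fintype A := Fintype.ofFinite A
  obtain ⟨x, hx1, hx2, hx3⟩ := hne
  -- The basic sets of the approximating filter.
  set 𝒮 : Finset (List S) → Set (List S) := fun E =>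
    {w | φ w ≠ none ∧ ∀ u ∈ E, φ (w ++ u) = φ' u} with h𝒮
  have hSne : ∀ E, (𝒮 E).Nonempty := by
    intro E
    have hopen : IsOpen {ψ : List S → Option M | ∀ u ∈ E, ψ u = φ' u} := by
      have heq : {ψ : List S → Option M | ∀ u ∈ E, ψ u = φ' u}
          = (↑E : Set (List S)).pi (fun u => ({φ' u} : Set (Option M))) := by
        ext ψ; simp [Set.mem_pi]
      rw [heq]
      exact isOpen_set_pi E.finite_toSet fun u _ => isOpen_discrete _
    obtain ⟨ψ, hψE, w, hw, rfl⟩ :=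
      mem_closure_iff.mp hcl _ hopen (fun u _ => rfl)
    exact ⟨w, hw, fun u hu => hψE u hu⟩
  have hdir : Directed (· ≥ ·) fun E => (𝓟 (𝒮 E) : Filter (List S)) := by
    intro E E'
    refine ⟨E ∪ E', ?_, ?_⟩ <;>
    · simp only [ge_iff_le, le_principal_iff, mem_principal]
      intro w hw
      exact ⟨hw.1, fun u hu => hw.2 u (by simp [hu])⟩
  haveI hNeBot : (⨅ E, 𝓟 (𝒮 E)).NeBot :=
    iInf_neBot_of_directed' hdir fun E => principal_neBot_iff.mpr (hSne E)
  let 𝓤 : Ultrafilter (List S) := Ultrafilter.of (⨅ E, 𝓟 (𝒮 E))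
  have hU : ∀ E, 𝒮 E ∈ 𝓤 := fun E =>
    Ultrafilter.of_le _ (mem_iInf_of_mem E (mem_principal_self _))
  have hφU : ∀ u : List S, {w | φ (w ++ u) = φ' u} ∈ 𝓤 := fun u =>
    Filter.mem_of_superset (hU {u}) (fun w hw => hw.2 u (by simp))
  -- Choose the limit value along the ultrafilter.
  have hex : ∀ u : List S, ∃ a : Option A, {w | x (w ++ u) = a} ∈ 𝓤 := by
    intro u
    obtain ⟨a, ha⟩ := (𝓤.map fun w => x (w ++ u)).eq_pure_of_finite
    refine ⟨a, ?_⟩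
    have : {a} ∈ (𝓤.map fun w => x (w ++ u)) := by rw [ha]; exact rfl
    simpa [Ultrafilter.mem_map, Set.preimage, Set.mem_singleton_iff] using this
  choose x' hx' using hex
  refine ⟨x', ?_, ?_, ?_⟩
  · -- (s1)
    intro u
    obtain ⟨w, hw1, hw2⟩ :=
      Ultrafilter.nonempty_of_mem (Filter.inter_mem (hx' u) (hφU u))
    rw [← hw1, ← hw2]
    exact hx1 (w ++ u)
  · -- (s2)
    intro u v huv hu hv
    obtain ⟨w, hw⟩ := Ultrafilter.nonempty_of_mem
      (Filter.inter_mem (Filter.inter_mem (hx' u) (hx' v))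
        (Filter.inter_mem (hφU u) (hφU v)))
    obtain ⟨⟨hwu, hwv⟩, hpu, hpv⟩ := hw
    rw [← hwu, ← hwv]
    exact hx2 (w ++ u) (w ++ v) (huv.prepend w)
      (by rw [hpu]; exact hu) (by rw [hpv]; exact hv)
  · -- (s3)
    intro p hp w' hw'
    have hT := hF p hp
    obtain ⟨w, hw⟩ := Ultrafilter.nonempty_of_mem
      (Filter.inter_mem (hφU w')
        (Filter.inter_mem
          ((Filter.biInter_finset_mem hT.toFinset).mpr
            fun u _ => hx' (w' ++ u))
          ((Filter.biInter_finset_mem hT.toFinset).mpr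
            fun u _ => hφU (w' ++ u))))
    obtain ⟨hww', hxs, hφs⟩ := hw
    have hwn : φ (w ++ w') ≠ none := by rw [hww']; exact hw'
    obtain ⟨u, hpu, hneq⟩ := hx3 p hp (w ++ w') hwn
    have huT : u ∈ hT.toFinset := by simpa using hpu
    refine ⟨u, hpu, ?_⟩
    have hxe : x' (w' ++ u) = x (w ++ (w' ++ u)) :=
      (Set.mem_iInter₂.mp hxs u huT).symm
    have hφe : φ' (w' ++ u) = φ (w ++ (w' ++ u)) :=
      (Set.mem_iInter₂.mp hφs u huT).symm
    have : confPair φ' x' (w' ++ u) = confPair φ x (w ++ w' ++ u) := by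
      simp [confPair, hxe, hφe, List.append_assoc]
    rw [this]
    exact hneq
end

section
/- Let Γ be a finitely generated blueprint and A a finite alphabet. A subset X of A[Γ] (the full Γ-shift) is a Γ-subshift, i.e., equals X[Γ, ℱ] for some set of forbidden patterns ℱ, if and only if X is closed in the prodiscrete topology and invariant under the partial action of S*, meaning (φ, x)·w ∈ X for all (φ, x) ∈ X and w ∈ supp(φ), where ((φ, x)·w)(u) = (φ(wu), x(wu)). -/
/-- A configuration `c ∈ ((M × A) ∪ {∅})^{S*}` belongs to the full `Γ`-shift `A[Γ]`:
its state part is a `Γ`-model and its alphabet part is constant on `Γ`-equivalence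
classes within the support. -/
def Blueprint.InFullShift {M S A : Type*} (Γ : Blueprint M S)
    (c : List S → Option (M × A)) : Prop :=
  Γ.IsModel (fun w => (c w).map Prod.fst) ∧
    ∀ u v : List S, Γ.Equiv u v → c u ≠ none → c v ≠ none →
      (c u).map Prod.snd = (c v).map Prod.snd

/-- `c` avoids all forbidden patterns of `F` at every point of its support. -/
def AvoidsPatterns {M S A : Type*} (F : Set (List S → Option (M × A)))
    (c : List S → Option (M × A)) : Prop :=
  ∀ p ∈ F, ∀ w : List S, c w ≠ none →
    ∃ u : List S, p u ≠ none ∧ c (w ++ u) ≠ p u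

/-!
The full shift and each pattern-avoidance condition are intersections of conditions that read
finitely many coordinates, hence closed; shift invariance holds because `Γ`-equivalence is
compatible with left concatenation. Conversely, forbid every finite pattern that occurs at the
root of no point of `X`. If `c` avoids these but lies outside the closed set `X`, some cylinder
around `c` on a finite set `I` of words misses `X`. The restriction of `c` to the prefixes of
words in `I` is then forbidden: by consistency, whether `w ++ [s]` lies in the support of a model
is decided by its value at `w`, so a point of the full shift matching the restriction on its
support agrees with `c` on all of `I`.
-/

instance {α : Type*} : DiscreteTopology (Option α) := ⟨rfl⟩

section Prodiscrete

variable {ι β : Type*} [TopologicalSpace β]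

theorem isClosed_setOf_of_dependsOn [DiscreteTopology β] {P : (ι → β) → Prop} {s : Set ι}
    (hs : s.Finite) (hP : DependsOn P s) : IsClosed {c | P c} := by
  refine isOpen_compl_iff.mp (isOpen_iff_forall_mem_open.mpr fun c hc => ?_)
  refine ⟨s.pi fun i => {c i}, fun d hd => ?_, isOpen_set_pi hs fun _ _ => isOpen_discrete _,
    fun i _ => rfl⟩
  have hdc : P d = P c := hP fun i hi => hd i hi
  simpa [hdc] using hc

theorem IsOpen.exists_finset_eqOn_subset {s : Set (ι → β)} (hs : IsOpen s)
    {c : ι → β} (hc : c ∈ s) :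
    ∃ I : Finset ι, ∀ d : ι → β, (∀ i ∈ I, d i = c i) → d ∈ s := by
  obtain ⟨I, u, hu, hIu⟩ := isOpen_pi_iff.mp hs c hc
  exact ⟨I, fun d hd => hIu fun i hi => hd i hi ▸ (hu i hi).2⟩

end Prodiscrete

section Patterns

variable {M S A : Type*}

theorem AvoidsPatterns.shift {F : Set (List S → Option (M × A))} {c : List S → Option (M × A)}
    (hc : AvoidsPatterns F c) (w : List S) : AvoidsPatterns F fun u => c (w ++ u) :=
  fun p hp v hv => by simpa using hc p hp (w ++ v) hv

theorem isClosed_setOf_avoidsPatterns {F : Set (List S → Option (M × A))}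
    (hF : ∀ p ∈ F, {u : List S | p u ≠ none}.Finite) :
    IsClosed {c : List S → Option (M × A) | AvoidsPatterns F c} := by
  simp only [AvoidsPatterns, Set.ofPred_forall]
  refine isClosed_iInter fun p => isClosed_iInter fun hp => isClosed_iInter fun w =>
    isClosed_setOf_of_dependsOn (((hF p hp).image (w ++ ·)).insert w) fun c d h => ?_
  have hw : c w = d w := h w (Set.mem_insert _ _)
  have hu (u : List S) (hu : p u ≠ none) : c (w ++ u) = d (w ++ u) :=
    h _ (Set.mem_insert_of_mem _ ⟨u, hu, rfl⟩)
  rw [hw]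
  exact propext <| imp_congr_right fun _ => exists_congr fun u =>
    and_congr_right fun hpu => by rw [hu u hpu]

def forbiddenPatterns (X : Set (List S → Option (M × A))) : Set (List S → Option (M × A)) :=
  {p | {u | p u ≠ none}.Finite ∧ ∀ d ∈ X, ∃ u, p u ≠ none ∧ d u ≠ p u}

theorem avoidsPatterns_forbiddenPatterns {X : Set (List S → Option (M × A))}
    (hX : ∀ c ∈ X, ∀ w : List S, c w ≠ none → (fun u => c (w ++ u)) ∈ X)
    {c : List S → Option (M × A)} (hc : c ∈ X) : AvoidsPatterns (forbiddenPatterns X) c :=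
  fun _ hp w hw => hp.2 _ (hX c hc w hw)

end Patterns

namespace Blueprint

variable {M S A : Type*} {Γ : Blueprint M S}

theorem Similar.append_left {u v : List S} (w : List S) (h : Γ.Similar u v) :
    Γ.Similar (w ++ u) (w ++ v) := by
  obtain ⟨x, y, r, r', hr, rfl, rfl⟩ := h
  exact ⟨w ++ x, y, r, r', hr, by simp, by simp⟩

theorem Equiv.append_left {u v : List S} (w : List S) (h : Γ.Equiv u v) :
    Γ.Equiv (w ++ u) (w ++ v) := by
  induction h with
  | rel _ _ h => exact .rel _ _ (h.append_left w)
  | refl => exact .refl _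
  | symm _ _ _ ih => exact ih.symm
  | trans _ _ _ _ _ ih₁ ih₂ => exact ih₁.trans _ _ _ ih₂

theorem isClosed_setOf_inFullShift (Γ : Blueprint M S) :
    IsClosed {c : List S → Option (M × A) | Γ.InFullShift c} := by
  simp only [InFullShift, IsModel, Consistent, Set.ofPred_and, Set.ofPred_forall]
  have closed (s : Set (List S)) [Finite s] {P : (List S → Option (M × A)) → Prop}
      (hP : DependsOn P s) : IsClosed {c | P c} :=
    isClosed_setOf_of_dependsOn s.toFinite hP
  refine (((closed {[]} ?_).inter (isClosed_iInter fun w => isClosed_iInter fun s =>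
      (closed {w, w ++ [s]} ?_).inter (closed {w, w ++ [s]} ?_))).inter
    (isClosed_iInter fun u => isClosed_iInter fun v => isClosed_iInter fun _ =>
      closed {u, v} ?_)).inter
    (isClosed_iInter fun u => isClosed_iInter fun v => isClosed_iInter fun _ => closed {u, v} ?_)
  all_goals
    intro c d h
    simp only [Set.mem_insert_iff, Set.mem_singleton_iff, forall_eq_or_imp, forall_eq] at h
    simp only [h]

theorem InFullShift.shift {c : List S → Option (M × A)} (hc : Γ.InFullShift c) {w : List S}
    (hw : c w ≠ none) : Γ.InFullShift fun u => c (w ++ u) := by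
  obtain ⟨⟨⟨-, hsucc⟩, hstate⟩, hletter⟩ := hc
  refine ⟨⟨⟨by simpa using hw, fun u s => by simpa using hsucc (w ++ u) s⟩,
    fun u v huv hu hv => hstate _ _ (huv.append_left w) hu hv⟩,
    fun u v huv => hletter _ _ (huv.append_left w)⟩

theorem Consistent.eq_of_forall_prefix {c d : List S → Option (M × A)}
    (hc : Γ.Consistent fun w => (c w).map Prod.fst)
    (hd : Γ.Consistent fun w => (d w).map Prod.fst)
    {v : List S} (h : ∀ u, u <+: v → c u ≠ none → d u = c u) : d v = c v := by
  induction v using List.reverseRecOn with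
  | nil => exact h [] List.prefix_rfl fun h0 => hc.1 (by simp [h0])
  | append_singleton v s ih =>
    by_cases hcs : c (v ++ [s]) = none
    · have hdv : d v = c v := ih fun u hu => h u (hu.trans (List.prefix_append v [s]))
      have hnot : (d v).map Prod.fst ≠ some (Γ.init s) := by
        rw [hdv]
        intro hinit
        obtain ⟨m, -, hm⟩ := (hc.2 v s).1 hinit
        simp [hcs] at hm
      simpa [hcs] using (hd.2 v s).2 hnot
    · exact h _ List.prefix_rfl hcs

theorem mem_of_avoidsPatterns_forbiddenPatterns {X : Set (List S → Option (M × A))}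
    (hXΓ : ∀ d ∈ X, Γ.InFullShift d) (hXc : IsClosed X) {c : List S → Option (M × A)}
    (hc : Γ.InFullShift c) (hav : AvoidsPatterns (forbiddenPatterns X) c) : c ∈ X := by
  classical
  by_contra hcX
  obtain ⟨I, hI⟩ := hXc.isOpen_compl.exists_finset_eqOn_subset hcX
  set U : Set (List S) := {v | ∃ i ∈ I, v <+: i}
  set p : List S → Option (M × A) := fun v => if v ∈ U then c v else none with hp_def
  have hUfin : U.Finite :=
    (I.finite_toSet.biUnion fun i _ => i.inits.finite_toSet).subset
      fun v ⟨i, hi, hvi⟩ => Set.mem_biUnion hi ((List.mem_inits _ _).2 hvi)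
  have hsupp {v : List S} (hv : p v ≠ none) : v ∈ U := by
    by_contra hvU
    simp [hp_def, hvU] at hv
  have hp : p ∈ forbiddenPatterns X := by
    refine ⟨hUfin.subset fun v => hsupp, fun d hd => ?_⟩
    by_contra! hdp
    refine hI d (fun i hi => ?_) hd
    refine Consistent.eq_of_forall_prefix hc.1.1 (hXΓ d hd).1.1 fun u hu hcu => ?_
    have huU : u ∈ U := ⟨i, hi, hu⟩
    simpa [hp_def, huU] using hdp u (by simpa [hp_def, huU] using hcu)
  obtain ⟨u, hpu, hcu⟩ := hav p hp [] fun h0 => hc.1.1.1 (by simp [h0])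
  simp [hp_def, hsupp hpu] at hcu

end Blueprint

theorem stmt15_general {M S A : Type*}
    (Γ : Blueprint M S) (X : Set (List S → Option (M × A)))
    (hX : ∀ c ∈ X, Γ.InFullShift c) :
    (∃ F : Set (List S → Option (M × A)),
        (∀ p ∈ F, {u : List S | p u ≠ none}.Finite) ∧
        X = {c | Γ.InFullShift c ∧ AvoidsPatterns F c}) ↔
      (IsClosed X ∧
        ∀ c ∈ X, ∀ w : List S, c w ≠ none → (fun u => c (w ++ u)) ∈ X) := by
  constructor
  · rintro ⟨F, hF, rfl⟩
    exact ⟨(Blueprint.isClosed_setOf_inFullShift Γ).inter (isClosed_setOf_avoidsPatterns hF),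
      fun c ⟨hcΓ, hcF⟩ w hw => ⟨hcΓ.shift hw, hcF.shift w⟩⟩
  · rintro ⟨hXc, hXinv⟩
    refine ⟨forbiddenPatterns X, fun p hp => hp.1, Set.Subset.antisymm
      (fun c hc => ⟨hX c hc, avoidsPatterns_forbiddenPatterns hXinv hc⟩)
      fun c ⟨hcΓ, hcF⟩ => Blueprint.mem_of_avoidsPatterns_forbiddenPatterns hX hXc hcΓ hcF⟩

/-- A subset of the full `Γ`-shift is a `Γ`-subshift (defined by a set of finitely supported
forbidden patterns) iff it is closed in the prodiscrete topology and invariant under the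
partial shift action of `S*`. -/
theorem stmt15 {M S A : Type*} [Finite M] [Finite S] [Finite A]
    (Γ : Blueprint M S) (X : Set (List S → Option (M × A)))
    (hX : ∀ c ∈ X, Γ.InFullShift c) :
    (∃ F : Set (List S → Option (M × A)),
        (∀ p ∈ F, {u : List S | p u ≠ none}.Finite) ∧
        X = {c | Γ.InFullShift c ∧ AvoidsPatterns F c}) ↔
      (IsClosed X ∧
        ∀ c ∈ X, ∀ w : List S, c w ≠ none → (fun u => c (w ++ u)) ∈ X) :=
  stmt15_general Γ X hX
end

section
/- Let ρ > 0 and let T be a set of 'punctured tiles placements' in ℝ^d given by a set of positions P ⊆ ℝ^d such that ⋃_{p ∈ P} B_ρ(p) covers a convex set C. Let t, t' ∈ P with B_{2ρ}(t) ∪ B_{2ρ}(t') ⊆ C, let K ≥ 1, and let x ∈ B_{Kρ}(t) ∩ B_{Kρ}(t'). Then there exists a sequence t = p₀, p₁, …, p_n = t' of points of P such that (1) n ≤ 2 + ⌈‖t − t'‖/ρ⌉; (2) p_k ∈ C and ‖p_k − p_{k−1}‖ ≤ 3ρ for all 1 ≤ k ≤ n; and (3) x ∈ B_{Kρ}(p_k)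 for all 0 ≤ k ≤ n. -/
set_option maxHeartbeats 1000000

/-- Visibility lemma: positions of tiles covering a convex set can be joined, within sight of a
common point `x`, by a short chain of positions with consecutive jumps at most `3ρ`. -/
theorem stmt19 {d : ℕ} (ρ : ℝ) (hρ : 0 < ρ) (K : ℝ) (hK : 1 ≤ K)
    (C P : Set (EuclideanSpace ℝ (Fin d))) (hC : Convex ℝ C)
    (hcover : ∀ c ∈ C, ∃ p ∈ P, ‖c - p‖ ≤ ρ)
    (t t' : EuclideanSpace ℝ (Fin d)) (ht : t ∈ P) (ht' : t' ∈ P)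
    (hballt : ∀ z : EuclideanSpace ℝ (Fin d), ‖z - t‖ ≤ 2 * ρ → z ∈ C)
    (hballt' : ∀ z : EuclideanSpace ℝ (Fin d), ‖z - t'‖ ≤ 2 * ρ → z ∈ C)
    (x : EuclideanSpace ℝ (Fin d)) (hxt : ‖x - t‖ ≤ K * ρ) (hxt' : ‖x - t'‖ ≤ K * ρ) :
    ∃ (n : ℕ) (p : Fin (n + 1) → EuclideanSpace ℝ (Fin d)),
      p 0 = t ∧ p (Fin.last n) = t' ∧
      (∀ k, p k ∈ P) ∧
      n ≤ 2 + ⌈‖t - t'‖ / ρ⌉₊ ∧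
      (∀ k : Fin n, p k.succ ∈ C ∧ ‖p k.succ - p k.castSucc‖ ≤ 3 * ρ) ∧
      (∀ k, ‖x - p k‖ ≤ K * ρ) := by
  classical
  have tri : ∀ a b c : EuclideanSpace ℝ (Fin d), ‖a - c‖ ≤ ‖a - b‖ + ‖b - c‖ := by
    intro a b c
    have h : a - c = (a - b) + (b - c) := by abel
    rw [h]; exact norm_add_le _ _
  obtain ⟨Mρ, hMρdef⟩ : ∃ Mρ : ℝ, Mρ = max (max ‖x - t‖ ‖x - t'‖) ρ := ⟨_, rfl⟩
  have hMρpos : 0 < Mρ := hMρdef ▸ lt_of_lt_of_le hρ (le_max_right _ _)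
  have hMρK : Mρ ≤ K * ρ := hMρdef ▸ max_le (max_le hxt hxt') (by nlinarith)
  obtain ⟨lam, hlamdef⟩ : ∃ lam : ℝ, lam = ρ / Mρ := ⟨_, rfl⟩
  have hlam0 : 0 ≤ lam := hlamdef ▸ le_of_lt (div_pos hρ hMρpos)
  have hlam1 : lam ≤ 1 := hlamdef ▸ (div_le_one hMρpos).mpr (hMρdef ▸ le_max_right _ _)
  have hlamM : lam * Mρ = ρ := hlamdef ▸ div_mul_cancel₀ ρ (ne_of_gt hMρpos)
  obtain ⟨y, hydef⟩ : ∃ y, y = t + lam • (x - t) := ⟨_, rfl⟩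
  obtain ⟨z, hzdef⟩ : ∃ z, z = t' + lam • (x - t') := ⟨_, rfl⟩
  have hxtM : ‖x - t‖ ≤ Mρ := hMρdef ▸ le_trans (le_max_left _ _) (le_max_left _ _)
  have hxt'M : ‖x - t'‖ ≤ Mρ := hMρdef ▸ le_trans (le_max_right _ _) (le_max_left _ _)
  have hyt : ‖y - t‖ ≤ ρ := by
    have h : y - t = lam • (x - t) := by rw [hydef]; abel
    rw [h, norm_smul, Real.norm_eq_abs, abs_of_nonneg hlam0]
    nlinarith [norm_nonneg (x - t)]
  have hzt' : ‖z - t'‖ ≤ ρ := by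
    have h : z - t' = lam • (x - t') := by rw [hzdef]; abel
    rw [h, norm_smul, Real.norm_eq_abs, abs_of_nonneg hlam0]
    nlinarith [norm_nonneg (x - t')]
  have hxy : ‖x - y‖ ≤ (K - 1) * ρ := by
    have h : x - y = (1 - lam) • (x - t) := by rw [hydef]; module
    rw [h, norm_smul, Real.norm_eq_abs, abs_of_nonneg (by linarith)]
    nlinarith [norm_nonneg (x - t)]
  have hxz : ‖x - z‖ ≤ (K - 1) * ρ := by
    have h : x - z = (1 - lam) • (x - t') := by rw [hzdef]; module
    rw [h, norm_smul, Real.norm_eq_abs, abs_of_nonneg (by linarith)]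
    nlinarith [norm_nonneg (x - t')]
  have hzy : ‖z - y‖ ≤ ‖t - t'‖ := by
    have h : z - y = (1 - lam) • (t' - t) := by rw [hydef, hzdef]; module
    rw [h, norm_smul, Real.norm_eq_abs, abs_of_nonneg (by linarith),
      show t' - t = -(t - t') by abel, norm_neg]
    nlinarith [norm_nonneg (t - t')]
  obtain ⟨m, hmdef⟩ : ∃ m : ℕ, m = ⌈‖z - y‖ / ρ⌉₊ := ⟨_, rfl⟩
  have hDm : ‖z - y‖ ≤ m * ρ := by
    have h := Nat.le_ceil (‖z - y‖ / ρ)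
    rw [div_le_iff₀ hρ] at h
    rw [← hmdef] at h
    linarith
  obtain ⟨w, hw⟩ : ∃ w : ℕ → EuclideanSpace ℝ (Fin d),
      ∀ i, w i = y + ((i : ℝ) / (m : ℝ)) • (z - y) := ⟨_, fun _ => rfl⟩
  have hsle : ∀ i : ℕ, i ≤ m → 0 ≤ (i : ℝ) / (m : ℝ) ∧ (i : ℝ) / (m : ℝ) ≤ 1 := by
    intro i hi
    rcases Nat.eq_zero_or_pos m with hm | hm
    · have hi0 : i = 0 := by omega
      subst hi0; simp
    · refine ⟨by positivity, ?_⟩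
      rw [div_le_one (by exact_mod_cast hm)]
      exact_mod_cast hi
  -- any ρ-perturbation of a point of the segment [y,z] lies in C
  have hA : ∀ s : ℝ, 0 ≤ s → s ≤ 1 → ∀ v : EuclideanSpace ℝ (Fin d), ‖v‖ ≤ ρ →
      (y + s • (z - y)) + v ∈ C := by
    intro s hs0 hs1 v hv
    have h1 : y + v ∈ C := by
      apply hballt
      have h : y + v - t = (y - t) + v := by abel
      rw [h]
      calc ‖(y - t) + v‖ ≤ ‖y - t‖ + ‖v‖ := norm_add_le _ _
        _ ≤ 2 * ρ := by linarith
    have h2 : z + v ∈ C := by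
      apply hballt'
      have h : z + v - t' = (z - t') + v := by abel
      rw [h]
      calc ‖(z - t') + v‖ ≤ ‖z - t'‖ + ‖v‖ := norm_add_le _ _
        _ ≤ 2 * ρ := by linarith
    have h3 : (1 - s) • (y + v) + s • (z + v) ∈ C := hC h1 h2 (by linarith) hs0 (by ring)
    have h4 : (y + s • (z - y)) + v = (1 - s) • (y + v) + s • (z + v) := by module
    rwa [h4]
  have hB : ∀ s : ℝ, 0 ≤ s → s ≤ 1 → ‖x - (y + s • (z - y))‖ ≤ (K - 1) * ρ := by
    intro s hs0 hs1
    have h1 : x - (y + s • (z - y)) = (1 - s) • (x - y) + s • (x - z) := by module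
    rw [h1]
    calc ‖(1 - s) • (x - y) + s • (x - z)‖
        ≤ ‖(1 - s) • (x - y)‖ + ‖s • (x - z)‖ := norm_add_le _ _
      _ = (1 - s) * ‖x - y‖ + s * ‖x - z‖ := by
          rw [norm_smul, norm_smul, Real.norm_eq_abs, Real.norm_eq_abs,
            abs_of_nonneg (by linarith : (0:ℝ) ≤ 1 - s), abs_of_nonneg hs0]
      _ ≤ (1 - s) * ((K - 1) * ρ) + s * ((K - 1) * ρ) := by
          exact add_le_add (mul_le_mul_of_nonneg_left hxy (by linarith))
            (mul_le_mul_of_nonneg_left hxz hs0)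
      _ = (K - 1) * ρ := by ring
  have hwC : ∀ i : ℕ, i ≤ m → w i ∈ C := by
    intro i hi
    have h := hA _ (hsle i hi).1 (hsle i hi).2 0 (by simp [le_of_lt hρ])
    rw [add_zero] at h
    rwa [hw]
  have hex : ∀ i : ℕ, ∃ pt, pt ∈ P ∧ (i ≤ m → ‖w i - pt‖ ≤ ρ) := by
    intro i
    by_cases hi : i ≤ m
    · obtain ⟨pt, hp1, hp2⟩ := hcover _ (hwC i hi)
      exact ⟨pt, hp1, fun _ => hp2⟩
    · exact ⟨t, ht, fun h => absurd h hi⟩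
  choose q hqP hqd using hex
  have hqC : ∀ i : ℕ, i ≤ m → q i ∈ C := by
    intro i hi
    have h2 := hA ((i : ℝ) / (m : ℝ)) (hsle i hi).1 (hsle i hi).2 (q i - w i)
      (by rw [norm_sub_rev]; exact hqd i hi)
    rw [← hw i] at h2
    rwa [show w i + (q i - w i) = q i from by abel] at h2
  have hw0 : w 0 = y := by rw [hw]; simp
  have hwm : w m = z := by
    rcases Nat.eq_zero_or_pos m with hm | hm
    · have hD0 : ‖z - y‖ = 0 := by
        have := norm_nonneg (z - y)
        rw [hm] at hDm; push_cast at hDm; linarith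
      have hzy' : z = y := by
        have := norm_eq_zero.mp hD0
        have h2 : z - y = 0 := this
        rw [sub_eq_zero] at h2; exact h2
      rw [hm, hw]; simp [hzy']
    · have hne : (m : ℝ) ≠ 0 := Nat.cast_ne_zero.mpr (by omega)
      rw [hw, div_self hne, one_smul]
      abel
  have hstep : ∀ j : ℕ, j + 1 ≤ m → ‖w (j + 1) - w j‖ ≤ ρ := by
    intro j hj
    have hm : (0 : ℝ) < m := by exact_mod_cast lt_of_lt_of_le (Nat.succ_pos j) hj
    have h1 : w (j + 1) - w j = (((j:ℝ) + 1) / m - (j:ℝ) / m) • (z - y) := by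
      rw [hw, hw, sub_smul]; push_cast; abel
    have h2 : ((j:ℝ) + 1) / m - (j:ℝ) / m = 1 / m := by
      rw [div_sub_div_same]; ring_nf
    rw [h1, h2, norm_smul, Real.norm_eq_abs,
      abs_of_nonneg (by positivity : (0:ℝ) ≤ 1 / (m:ℝ))]
    rw [div_mul_eq_mul_div, one_mul, div_le_iff₀ hm]
    calc ‖z - y‖ ≤ (m:ℝ) * ρ := hDm
      _ = ρ * m := mul_comm _ _
  obtain ⟨p, hp⟩ : ∃ p : Fin (m + 2 + 1) → EuclideanSpace ℝ (Fin d),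
      ∀ k, p k = if k.val = 0 then t else if k.val = m + 2 then t' else q (k.val - 1) :=
    ⟨_, fun _ => rfl⟩
  have hq' : ∀ k : Fin (m + 2 + 1), k.val ≠ 0 → k.val ≠ m + 2 → p k = q (k.val - 1) :=
    fun k h1 h2 => by rw [hp, if_neg h1, if_neg h2]
  refine ⟨m + 2, p, ?_, ?_, ?_, ?_, ?_, ?_⟩
  · rw [hp]; simp
  · rw [hp, Fin.val_last, if_neg (by omega), if_pos (rfl : m + 2 = m + 2)]
  · intro k; rw [hp]; split_ifs
    · exact ht
    · exact ht'
    · exact hqP _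
  · have h : ⌈‖z - y‖ / ρ⌉₊ ≤ ⌈‖t - t'‖ / ρ⌉₊ := Nat.ceil_le_ceil (by gcongr)
    omega
  · intro k
    have hk3 : k.val < m + 2 := k.isLt
    rcases Nat.lt_or_ge k.val (m + 1) with hkm | hkm
    · -- k.val ≤ m
      have hsucc : p k.succ = q k.val := by
        have h := hq' k.succ (by rw [Fin.val_succ]; omega) (by rw [Fin.val_succ]; omega)
        rw [Fin.val_succ, Nat.add_sub_cancel] at h
        exact h
      refine ⟨by rw [hsucc]; exact hqC k.val (by omega), ?_⟩
      rcases Nat.eq_zero_or_pos k.val with h0 | h0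
      · have hcast : p k.castSucc = t := by
          rw [hp, if_pos (show (k.castSucc).val = 0 by rw [Fin.coe_castSucc, h0])]
        rw [hsucc, hcast, h0]
        have h1 := hqd 0 (Nat.zero_le m)
        have h2 := tri (q 0) (w 0) t
        rw [hw0] at h2
        rw [norm_sub_rev] at h1
        rw [hw0] at h1
        linarith
      · obtain ⟨j, hj⟩ : ∃ j, k.val = j + 1 := ⟨k.val - 1, by omega⟩
        have hcast : p k.castSucc = q j := by
          have h := hq' k.castSucc (by rw [Fin.coe_castSucc]; omega)
            (by rw [Fin.coe_castSucc]; omega)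
          rw [Fin.coe_castSucc, hj, Nat.add_sub_cancel] at h
          exact h
        rw [hsucc, hcast, hj]
        have hj1 : j + 1 ≤ m := by omega
        have h1 := hqd (j + 1) hj1
        have h2 := hqd j (by omega)
        have h3 := hstep j hj1
        have h4 := tri (q (j + 1)) (w (j + 1)) (q j)
        have h5 := tri (w (j + 1)) (w j) (q j)
        rw [norm_sub_rev] at h1
        linarith
    · -- k.val = m + 1
      have hkv : k.val = m + 1 := by omega
      have hsucc : p k.succ = t' := by
        rw [hp, if_neg (show ¬(k.succ).val = 0 by rw [Fin.val_succ]; omega),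
          if_pos (show (k.succ).val = m + 2 by rw [Fin.val_succ, hkv])]
      have hcast : p k.castSucc = q m := by
        have h := hq' k.castSucc (by rw [Fin.coe_castSucc]; omega)
          (by rw [Fin.coe_castSucc]; omega)
        rw [Fin.coe_castSucc, hkv, Nat.add_sub_cancel] at h
        exact h
      refine ⟨by rw [hsucc]; exact hballt' t' (by rw [sub_self, norm_zero]; positivity), ?_⟩
      rw [hsucc, hcast]
      have h1 := hqd m le_rfl
      rw [hwm] at h1
      have h2 := tri t' z (q m)
      rw [norm_sub_rev] at hzt'
      linarith
  · intro k
    rw [hp]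
    split_ifs with h1 h2
    · exact hxt
    · exact hxt'
    · have hk3 : k.val < m + 2 + 1 := k.isLt
      have hkm : k.val - 1 ≤ m := by omega
      have h4 := tri x (w (k.val - 1)) (q (k.val - 1))
      have h5 := hqd (k.val - 1) hkm
      have h6 : ‖x - w (k.val - 1)‖ ≤ (K - 1) * ρ := by
        rw [hw]; exact hB _ (hsle _ hkm).1 (hsle _ hkm).2
      calc ‖x - q (k.val - 1)‖ ≤ ‖x - w (k.val - 1)‖ + ‖w (k.val - 1) - q (k.val - 1)‖ := h4
        _ ≤ (K - 1) * ρ + ρ := add_le_add h6 h5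
        _ = K * ρ := by ring
end
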